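/- Let K be a compact Hausdorff space that has a G_δ-point. Then C(K) is not 1-rigid octahedral: there exists f ∈ S_{C(K)} such that for every g ∈ B_{C(K)}, min(‖f + g‖, ‖f − g‖) < 2. -/

import Mathlib

/-!
Urysohn's lemma for the closed `G_δ`-set `{x}` gives `f : K → [0, 1]` attaining the value `1`
exactly at `x`. If `‖f + g‖ = 2` with `‖g‖ ≤ 1`, the norm of `f + g` is attained at a point
where `f` and `g` are both `1`, which can only be `x`; so `g x = 1`. Applied to `g` and `-g`,
`‖f + g‖ = ‖f - g‖ = 2` would force `g x = 1 = -g x`.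
-/

universe u

open Set

lemma eq_and_abs_eq_one_of_two_le_abs_add {a b : ℝ} (ha : |a| ≤ 1) (hb : |b| ≤ 1)
    (h : 2 ≤ |a + b|) : a = b ∧ |a| = 1 := by
  rw [abs_le] at ha hb
  rcases le_abs'.1 h with h | h
  · exact ⟨by linarith, by rw [abs_of_neg (by linarith)]; linarith⟩
  · exact ⟨by linarith, by rw [abs_of_pos (by linarith)]; linarith⟩

namespace ContinuousMap

variable {K : Type*} [TopologicalSpace K] [CompactSpace K]

lemma exists_norm_apply_eq_norm {E : Type*} [SeminormedAddCommGroup E] [Nonempty K]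
    (f : C(K, E)) : ∃ y, ‖f y‖ = ‖f‖ := by
  obtain ⟨y, -, hy⟩ := isCompact_univ.exists_isMaxOn univ_nonempty f.continuous.norm.continuousOn
  exact ⟨y, le_antisymm (f.norm_coe_le_norm y)
    ((f.norm_le (norm_nonneg _)).2 fun z => hy (mem_univ z))⟩

lemma exists_eq_and_abs_eq_one_of_two_le_norm_add [Nonempty K] {f g : C(K, ℝ)}
    (hf : ‖f‖ ≤ 1) (hg : ‖g‖ ≤ 1) (h : 2 ≤ ‖f + g‖) : ∃ y, f y = g y ∧ |f y| = 1 := by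
  obtain ⟨y, hy⟩ := (f + g).exists_norm_apply_eq_norm
  refine ⟨y, eq_and_abs_eq_one_of_two_le_abs_add ?_ ?_ ?_⟩
  · exact (f.norm_coe_le_norm y).trans hf
  · exact (g.norm_coe_le_norm y).trans hg
  · simpa only [← hy, add_apply, Real.norm_eq_abs] using h

lemma norm_eq_one_of_mem_Icc {f : C(K, ℝ)} (hf : ∀ y, f y ∈ Icc (0 : ℝ) 1) {x : K}
    (hx : f x = 1) : ‖f‖ = 1 := by
  refine le_antisymm ((f.norm_le zero_le_one).2 fun y => ?_) ?_
  · rw [Real.norm_eq_abs, abs_le]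
    exact ⟨by linarith [(hf y).1], (hf y).2⟩
  · simpa [hx] using f.norm_coe_le_norm x

lemma apply_eq_one_of_two_le_norm_add {f g : C(K, ℝ)} {x : K} (hf : ∀ y, f y ∈ Icc (0 : ℝ) 1)
    (hfx : f ⁻¹' {1} ⊆ {x}) (hg : ‖g‖ ≤ 1) (h : 2 ≤ ‖f + g‖) : g x = 1 := by
  have : Nonempty K := ⟨x⟩
  obtain ⟨y, hfgy, hfy⟩ := exists_eq_and_abs_eq_one_of_two_le_norm_add
    ((f.norm_le zero_le_one).2 fun y => by simpa [abs_of_nonneg (hf y).1] using (hf y).2) hg h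
  rw [abs_of_nonneg (hf y).1] at hfy
  obtain rfl : y = x := hfx hfy
  rw [← hfgy, hfy]

end ContinuousMap

open ContinuousMap in
/-- If a compact Hausdorff space `K` has a `G_δ`-point, then `C(K)` is not `1`-rigid
octahedral: there is a norm-one `f ∈ C(K)` such that `min ‖f + g‖ ‖f - g‖ < 2` for every
`g` in the closed unit ball. -/
theorem ck_not_rigid_octahedral_of_Gdelta (K : Type u) [TopologicalSpace K]
    [CompactSpace K] [T2Space K] (x : K) (hx : IsGδ ({x} : Set K)) :
    ∃ f : C(K, ℝ), ‖f‖ = 1 ∧ ∀ g : C(K, ℝ), ‖g‖ ≤ 1 → min ‖f + g‖ ‖f - g‖ < 2 := by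
  obtain ⟨f, hf1, -, -, hf⟩ := exists_continuous_one_zero_of_isCompact_of_isGδ
    isCompact_singleton hx isClosed_empty (disjoint_empty _)
  have hfx : f x = 1 := (hf1 ▸ mem_singleton x : x ∈ f ⁻¹' {1})
  refine ⟨f, norm_eq_one_of_mem_Icc hf hfx, fun g hg => ?_⟩
  by_contra! h
  rw [le_min_iff, sub_eq_add_neg] at h
  have hg_pos : g x = 1 := apply_eq_one_of_two_le_norm_add hf hf1.ge hg h.1
  have hg_neg : -g x = 1 := apply_eq_one_of_two_le_norm_add hf hf1.ge (by rwa [norm_neg]) h.2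
  linarith
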